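/- Let F(h) be the restriction of D(H) = ‖V − (W∘L)H‖_F² to the coordinate H_{rj} = h, and define G(h, h₀) = F(h₀) + F'(h₀)(h − h₀) + ([(W∘L)ᵀ(W∘L)H₀]_{rj}/h₀)(h − h₀)² where H₀ agrees with H and (H₀)_{rj} = h₀ > 0, and all matrices V, W, L, H are entrywise nonnegative. Then G(h, h₀) ≥ F(h) for all h and G(h₀, h₀) = F(h₀); i.e., G is an auxiliary function for F. -/

import Mathlib

/-!
Changing the single entry `H r j` by `h - h₀` perturbs `V - (W ⊙ L) H` by a rank-one matrix, so
`F` is exactly quadratic with leading coefficient `[(W ⊙ L)ᵀ(W ⊙ L)]_{rr}`, and `G` is its Taylor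
expansion at `h₀` with that coefficient replaced by `[(W ⊙ L)ᵀ(W ⊙ L)H₀]_{rj} / h₀`. Nonnegativity
makes the latter larger: the diagonal term `[(W ⊙ L)ᵀ(W ⊙ L)]_{rr} h₀` is one summand of the former.
-/

open Matrix BigOperators

section

variable {l m n R : Type*} [DecidableEq m] [DecidableEq n]

lemma of_ite_eq_of_ite_add_single [AddCommGroup R] (X : Matrix m n R) (r : m) (j : n) (a b : R) :
    (Matrix.of fun r' j' => if r' = r ∧ j' = j then b else X r' j') =
      (Matrix.of fun r' j' => if r' = r ∧ j' = j then a else X r' j') + single r j (b - a) := by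
  ext r' j'
  by_cases hr : r' = r <;> by_cases hj : j' = j <;> simp [hr, hj, single, Ne.symm]

lemma sum_sq_sub_mul_single [Fintype l] [Fintype m] [Fintype n] [CommRing R]
    (U : Matrix l n R) (A : Matrix l m R) (r : m) (j : n) (c : R) :
    ∑ i, ∑ k, (U - A * single r j c) i k ^ 2 =
      ∑ i, ∑ k, U i k ^ 2 - 2 * c * (Aᵀ * U) r j + c ^ 2 * (Aᵀ * A) r r := by
  have hrow : ∀ i k, (U - A * single r j c) i k ^ 2 =
      U i k ^ 2 + if k = j then c ^ 2 * (A i r * A i r) - 2 * c * (A i r * U i j) else 0 := by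
    intro i k
    by_cases hk : k = j
    · subst hk; simp only [Matrix.sub_apply, mul_single_apply_same, if_true]; ring
    · simp [hk]
  simp only [hrow, Finset.sum_add_distrib, Finset.sum_ite_eq', Finset.mem_univ, if_true,
    Finset.sum_sub_distrib, mul_apply, transpose_apply, ← Finset.mul_sum]
  ring

end

lemma deriv_eq_of_eq_quadratic {f : ℝ → ℝ} {p q a x₀ : ℝ}
    (hf : ∀ x, f x = p + q * (x - x₀) + a * (x - x₀) ^ 2) : deriv f x₀ = q := by
  have hlin : HasDerivAt (fun x => x - x₀) 1 x₀ := (hasDerivAt_id x₀).sub_const x₀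
  have hquad := ((hlin.const_mul q).const_add p).fun_add ((hlin.pow 2).const_mul a)
  rw [funext hf]
  simpa using hquad.deriv

lemma le_add_deriv_mul_add_of_eq_quadratic {f : ℝ → ℝ} {p q a c x₀ : ℝ}
    (hf : ∀ x, f x = p + q * (x - x₀) + a * (x - x₀) ^ 2) (hac : a ≤ c) (x : ℝ) :
    f x ≤ f x₀ + deriv f x₀ * (x - x₀) + c * (x - x₀) ^ 2 := by
  rw [hf x, hf x₀, deriv_eq_of_eq_quadratic hf]
  nlinarith [mul_le_mul_of_nonneg_right hac (sq_nonneg (x - x₀))]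

section

variable {l m n R : Type*} [CommSemiring R] [PartialOrder R] [IsOrderedRing R]

lemma transpose_mul_self_apply_nonneg [Fintype l] {A : Matrix l m R} (hA : ∀ i k, 0 ≤ A i k)
    (r k : m) : 0 ≤ (Aᵀ * A) r k :=
  Finset.sum_nonneg fun i _ => mul_nonneg (hA i r) (hA i k)

lemma apply_mul_apply_le_mul_apply [Fintype m] {B : Matrix l m R} {X : Matrix m n R}
    {i : l} {j : n} (hB : ∀ k, 0 ≤ B i k) (hX : ∀ k, 0 ≤ X k j) (k : m) :
    B i k * X k j ≤ (B * X) i j :=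
  Finset.single_le_sum (f := fun k => B i k * X k j) (fun k _ => mul_nonneg (hB k) (hX k))
    (Finset.mem_univ k)

end

theorem tsnmf_auxiliary_function_general (n t d : ℕ)
    (V : Matrix (Fin n) (Fin t) ℝ) (W L : Matrix (Fin n) (Fin d) ℝ)
    (H : Matrix (Fin d) (Fin t) ℝ)
    (hW : ∀ i r, 0 ≤ W i r) (hL : ∀ i r, 0 ≤ L i r)
    (hH : ∀ r j, 0 ≤ H r j)
    (r : Fin d) (j : Fin t) (h₀ : ℝ) (hh₀ : 0 < h₀)
    (F : ℝ → ℝ)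
    (hF : ∀ h, F h = ∑ i, ∑ j', ((V - (W ⊙ L) *
      (Matrix.of fun r' j' => if r' = r ∧ j' = j then h else H r' j')) i j') ^ 2)
    (H₀ : Matrix (Fin d) (Fin t) ℝ)
    (hH₀ : H₀ = Matrix.of fun r' j' => if r' = r ∧ j' = j then h₀ else H r' j')
    (G : ℝ → ℝ → ℝ)
    (hG : ∀ h, G h h₀ = F h₀ + deriv F h₀ * (h - h₀) +
      (((W ⊙ L)ᵀ * (W ⊙ L) * H₀) r j / h₀) * (h - h₀) ^ 2) :
    (∀ h, F h ≤ G h h₀) ∧ G h₀ h₀ = F h₀ := by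
  set A := W ⊙ L
  have hA : ∀ i k, 0 ≤ A i k := fun i k => mul_nonneg (hW i k) (hL i k)
  have hF_quadratic : ∀ h, F h = ∑ i, ∑ k, (V - A * H₀) i k ^ 2 +
      -2 * (Aᵀ * (V - A * H₀)) r j * (h - h₀) + (Aᵀ * A) r r * (h - h₀) ^ 2 := by
    intro h
    rw [hF, of_ite_eq_of_ite_add_single H r j h₀ h, ← hH₀, Matrix.mul_add, ← sub_sub,
      sum_sq_sub_mul_single]
    ring
  have hH₀_nonneg : ∀ k, 0 ≤ H₀ k j := by
    intro k
    rw [hH₀, of_apply]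
    split_ifs
    exacts [hh₀.le, hH k j]
  have hdiag : (Aᵀ * A) r r ≤ (Aᵀ * A * H₀) r j / h₀ := by
    rw [le_div_iff₀ hh₀]
    simpa [hH₀] using
      apply_mul_apply_le_mul_apply (transpose_mul_self_apply_nonneg hA r) hH₀_nonneg r
  exact ⟨fun h => (hG h).symm ▸ le_add_deriv_mul_add_of_eq_quadratic hF_quadratic hdiag h,
    by rw [hG]; ring⟩

/-- The TS-NMF auxiliary function for the coordinate `H r j`:
`G(h, h₀) = F(h₀) + F'(h₀)(h − h₀) + ([(W∘L)ᵀ(W∘L)H₀]_{rj}/h₀)(h − h₀)²`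
satisfies `G(h, h₀) ≥ F(h)` for all `h` and `G(h₀, h₀) = F(h₀)`. -/
theorem tsnmf_auxiliary_function (n t d : ℕ)
    (V : Matrix (Fin n) (Fin t) ℝ) (W L : Matrix (Fin n) (Fin d) ℝ)
    (H : Matrix (Fin d) (Fin t) ℝ)
    (hV : ∀ i j, 0 ≤ V i j) (hW : ∀ i r, 0 ≤ W i r) (hL : ∀ i r, 0 ≤ L i r)
    (hH : ∀ r j, 0 ≤ H r j)
    (r : Fin d) (j : Fin t) (h₀ : ℝ) (hh₀ : 0 < h₀)
    (F : ℝ → ℝ)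
    (hF : ∀ h, F h = ∑ i, ∑ j', ((V - (W ⊙ L) *
      (Matrix.of fun r' j' => if r' = r ∧ j' = j then h else H r' j')) i j') ^ 2)
    (H₀ : Matrix (Fin d) (Fin t) ℝ)
    (hH₀ : H₀ = Matrix.of fun r' j' => if r' = r ∧ j' = j then h₀ else H r' j')
    (G : ℝ → ℝ → ℝ)
    (hG : ∀ h, G h h₀ = F h₀ + deriv F h₀ * (h - h₀) +
      (((W ⊙ L)ᵀ * (W ⊙ L) * H₀) r j / h₀) * (h - h₀) ^ 2) :
    (∀ h, F h ≤ G h h₀) ∧ G h₀ h₀ = F h₀ :=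
  tsnmf_auxiliary_function_general n t d V W L H hW hL hH r j h₀ hh₀ F hF H₀ hH₀ G hG
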